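/- The following four ℚ-linear subspaces of ℌ coincide: A1 := span{φ(u ∗ v)x : u, v ∈ yℌ}; A2 := span{(u ◇ v)x : u, v ∈ yℌ}; A3 := span{y w1 (x+y)^n w2 x − y (x+y)^n (τ(w1) ◇ w2) x : n ∈ ℤ≥0, w1, w2 ∈ ℌ}; A4 := span{y w1 w2 x − y (τ(w1) ◇ w2) x : w1, w2 ∈ ℌ}. -/

import Mathlib

open scoped BigOperators

noncomputable section

/-- `ℌ = ℚ⟨x,y⟩`, the free noncommutative polynomial ring in two indeterminates,
realized as the free `ℚ`-algebra on `Bool` (`false ↦ x`, `true ↦ y`). -/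
abbrev H : Type := FreeAlgebra ℚ Bool

/-- The indeterminate `x`. -/
def Hx : H := FreeAlgebra.ι ℚ false

/-- The indeterminate `y`. -/
def Hy : H := FreeAlgebra.ι ℚ true

/-- The multiple zeta value `ζ(k₁,…,k_r) = ∑_{0<n₁<⋯<n_r} 1/(n₁^{k₁}⋯n_r^{k_r})`. -/
def MZV (r : ℕ) (k : Fin r → ℕ) : ℝ :=
  ∑' n : {n : Fin r → ℕ // (∀ i, 0 < n i) ∧ StrictMono n},
    ∏ i, (1 : ℝ) / (n.1 i : ℝ) ^ (k i)

/-- `Z : yℌx → ℝ` is the `ℚ`-linear map with `Z(y x^{k₁-1} ⋯ y x^{k_r-1}) = ζ(k₁,…,k_r)`.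
We encode it as a `ℚ`-linear map on all of `ℌ` whose values on the basis monomials
`y x^{k₁-1} ⋯ y x^{k_r-1}` (with `k_r ≥ 2`) of `yℌx` are the multiple zeta values;
these values determine `Z` uniquely on the subspace `yℌx`. -/
def IsZetaMap (Z : H →ₗ[ℚ] ℝ) : Prop :=
  ∀ (r : ℕ) (k : Fin (r + 1) → ℕ), (∀ i, 1 ≤ k i) → 2 ≤ k (Fin.last r) →
    Z ((List.ofFn fun i => Hy * Hx ^ (k i - 1)).prod) = MZV (r + 1) k

/-- The family `f(A,B) = (Z(A(x+y)^s B))_{s ≥ 0}`. -/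
def fam (Z : H →ₗ[ℚ] ℝ) (A B : H) : ℕ → ℝ := fun s => Z (A * (Hx + Hy) ^ s * B)

/-- The `ℚ`-bilinear product `◇` on `ℌ`, characterized by its recursive defining
properties (which determine it uniquely). -/
def IsDiamond (d : H →ₗ[ℚ] H →ₗ[ℚ] H) : Prop :=
  (∀ w, d w 1 = w) ∧ (∀ w, d 1 w = w) ∧
  (∀ w1 w2, d (Hx * w1) (Hx * w2) = Hx * d w1 (Hx * w2) - Hx * d (Hy * w1) w2) ∧
  (∀ w1 w2, d (Hx * w1) (Hy * w2) = Hx * d w1 (Hy * w2) + Hy * d (Hx * w1) w2) ∧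
  (∀ w1 w2, d (Hy * w1) (Hx * w2) = Hy * d w1 (Hx * w2) + Hx * d (Hy * w1) w2) ∧
  (∀ w1 w2, d (Hy * w1) (Hy * w2) = Hy * d w1 (Hy * w2) - Hy * d (Hx * w1) w2)

/-- The harmonic product `∗` on `ℌ`, characterized by its recursive defining
properties (which determine it uniquely). -/
def IsHarmonic (st : H →ₗ[ℚ] H →ₗ[ℚ] H) : Prop :=
  (∀ w, st w 1 = w) ∧ (∀ w, st 1 w = w) ∧
  (∀ w1 w2, st (Hx * w1) w2 = Hx * st w1 w2) ∧
  (∀ w1 w2, st w1 (Hx * w2) = Hx * st w1 w2) ∧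
  (∀ w1 w2, st (Hy * w1) (Hy * w2) = Hy * (st w1 (Hy * w2) + st (Hy * w1) w2 + Hx * st w1 w2))

/-- The anti-automorphism `τ` of `ℌ` interchanging `x` and `y`, characterized by
being `ℚ`-linear, anti-multiplicative, unital, and swapping the generators. -/
def IsTau (t : H →ₗ[ℚ] H) : Prop :=
  t 1 = 1 ∧ (∀ a b, t (a * b) = t b * t a) ∧ t Hx = Hy ∧ t Hy = Hx

/-- The automorphism `φ` of `ℌ` with `φ(x) = x + y` and `φ(y) = -y`. -/
def phi : H →ₐ[ℚ] H := FreeAlgebra.lift ℚ (fun b => if b then -Hy else Hx + Hy)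

/-- The automorphism `S₁` of `ℌ` with `S₁(x) = x` and `S₁(y) = x + y`. -/
def S1 : H →ₐ[ℚ] H := FreeAlgebra.lift ℚ (fun b => if b then Hx + Hy else Hx)

/-- The Dirichlet series `∑_{n ≥ 1} a_n / n^s` (with `a n` the coefficient indexed by
`n + 1`) converges to `L` at `s`, i.e. its partial sums tend to `L`. -/
def DSConv (a : ℕ → ℝ) (s : ℕ) (L : ℝ) : Prop :=
  Filter.Tendsto (fun N => ∑ n ∈ Finset.range N, a n / ((n : ℝ) + 1) ^ s)
    Filter.atTop (nhds L)

/-!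
Since `φ` is an involutive automorphism with `φ(y) = -y` that intertwines the two products,
`φ(u ∗ v) = φ(u) ◇ φ(v)`, the generating sets of `A₁` and `A₂` coincide. Left multiplication
by `x + y` commutes with `◇` and `τ` fixes `(x + y)ⁿ`, so the generator of `A₃` with data
`(n, w₁, w₂)` is the generator of `A₄` with data `(w₁ (x + y)ⁿ, w₂)`.

Write `R(w₁, w₂)` for the generator of `A₄`. The recursion for `y w₁ ◇ y w₂` gives
`R(w₁ y, w₂) - R(w₁, y w₂) = (y τ(w₁) ◇ y w₂) x = R(w₁, x w₂) - R(w₁ x, w₂)`. The first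
identity puts every generator of `A₂` into `A₄`; telescoping both along `w₁` from the right
down to `R(1, w) = 0` puts `A₄` into `A₂`.
-/

namespace FreeAlgebra

variable {R X : Type*} [CommSemiring R] {M : Submodule R (FreeAlgebra R X)}

theorem induction_ι_mul (one : 1 ∈ M)
    (ι_mul : ∀ x, ∀ w ∈ M, ι R x * w ∈ M) (a : FreeAlgebra R X) : a ∈ M := by
  suffices ∀ w ∈ M, a * w ∈ M by simpa using this 1 one
  induction a with
  | grade0 r => intro w hw; rw [← Algebra.smul_def]; exact M.smul_mem r hw
  | grade1 x => exact ι_mul x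
  | mul a b ha hb => intro w hw; rw [mul_assoc]; exact ha _ (hb w hw)
  | add a b ha hb => intro w hw; rw [add_mul]; exact M.add_mem (ha w hw) (hb w hw)

theorem induction_mul_ι (one : 1 ∈ M)
    (mul_ι : ∀ x, ∀ w ∈ M, w * ι R x ∈ M) (a : FreeAlgebra R X) : a ∈ M := by
  suffices ∀ w ∈ M, w * a ∈ M by simpa using this 1 one
  induction a with
  | grade0 r => intro w hw; rw [← Algebra.commutes, ← Algebra.smul_def]; exact M.smul_mem r hw
  | grade1 x => exact mul_ι x
  | mul a b ha hb => intro w hw; rw [← mul_assoc]; exact hb _ (ha w hw)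
  | add a b ha hb => intro w hw; rw [mul_add]; exact M.add_mem (ha w hw) (hb w hw)

end FreeAlgebra

theorem H.induction_left {M : Submodule ℚ H} (one : 1 ∈ M) (x_mul : ∀ w ∈ M, Hx * w ∈ M)
    (y_mul : ∀ w ∈ M, Hy * w ∈ M) (a : H) : a ∈ M :=
  FreeAlgebra.induction_ι_mul one (fun b => b.rec x_mul y_mul) a

theorem H.induction_right {M : Submodule ℚ H} (one : 1 ∈ M) (mul_x : ∀ w ∈ M, w * Hx ∈ M)
    (mul_y : ∀ w ∈ M, w * Hy ∈ M) (a : H) : a ∈ M :=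
  FreeAlgebra.induction_mul_ι one (fun b => b.rec mul_x mul_y) a

theorem phi_x : phi Hx = Hx + Hy := by simp [phi, Hx]

theorem phi_y : phi Hy = -Hy := by simp [phi, Hy]

theorem phi_involutive : Function.Involutive phi := by
  intro a
  suffices phi.comp phi = AlgHom.id ℚ H from congr($this a)
  ext b
  cases b <;> simp [phi, Hx, Hy]

namespace IsDiamond

variable {d : H →ₗ[ℚ] H →ₗ[ℚ] H}

theorem x_add_y_mul_left (hd : IsDiamond d) (u w : H) :
    d ((Hx + Hy) * u) w = (Hx + Hy) * d u w := by
  obtain ⟨h1, -, hxx, hxy, hyx, hyy⟩ := hd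
  suffices w ∈ LinearMap.eqLocus (d ((Hx + Hy) * u))
      (LinearMap.mulLeft ℚ (Hx + Hy) ∘ₗ d u) from this
  refine H.induction_left ?_ (fun w _ => ?_) (fun w _ => ?_) w <;>
    simp only [LinearMap.mem_eqLocus, LinearMap.comp_apply, LinearMap.mulLeft_apply, add_mul,
      map_add, LinearMap.add_apply, h1, hxx, hxy, hyx, hyy] <;>
    noncomm_ring

theorem x_add_y_mul_right (hd : IsDiamond d) (u w : H) :
    d u ((Hx + Hy) * w) = (Hx + Hy) * d u w := by
  have hleft := hd.x_add_y_mul_left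
  obtain ⟨-, h2, hxx, hxy, hyx, hyy⟩ := hd
  suffices u ∈ LinearMap.eqLocus (d.flip ((Hx + Hy) * w))
      (LinearMap.mulLeft ℚ (Hx + Hy) ∘ₗ d.flip w) from this
  refine H.induction_left ?_ ?_ ?_ u <;>
    simp only [LinearMap.mem_eqLocus, LinearMap.comp_apply, LinearMap.mulLeft_apply,
      LinearMap.flip_apply]
  · rw [h2, h2]
  all_goals
    intro u ih
    rw [← hleft] at ih
    simp only [add_mul, map_add, LinearMap.add_apply] at ih ⊢
  · rw [hxx, hxy]
    linear_combination (norm := noncomm_ring) Hx * ih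
  · rw [hyx, hyy]
    linear_combination (norm := noncomm_ring) Hy * ih

theorem x_add_y_pow_mul_left (hd : IsDiamond d) (n : ℕ) (u w : H) :
    d ((Hx + Hy) ^ n * u) w = (Hx + Hy) ^ n * d u w := by
  induction n generalizing u with
  | zero => simp
  | succ n ih => rw [pow_succ', mul_assoc, hd.x_add_y_mul_left, ih, ← mul_assoc, ← pow_succ']

theorem x_mul_add_y_mul_right_eq_left (hd : IsDiamond d) (u w : H) :
    d u (Hx * w) + d u (Hy * w) = d (Hx * u) w + d (Hy * u) w := by
  simpa only [add_mul, map_add, LinearMap.add_apply] using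
    (hd.x_add_y_mul_right u w).trans (hd.x_add_y_mul_left u w).symm

end IsDiamond

namespace IsTau

variable {t : H →ₗ[ℚ] H}

theorem involutive (ht : IsTau t) : Function.Involutive t := by
  obtain ⟨h1, hmul, hx, hy⟩ := ht
  intro a
  suffices a ∈ LinearMap.eqLocus (t ∘ₗ t) LinearMap.id from this
  refine H.induction_left ?_ ?_ ?_ a <;>
    simp only [LinearMap.mem_eqLocus, LinearMap.comp_apply, LinearMap.id_apply]
  · rw [h1, h1]
  · intro w ih; rw [hmul, hx, hmul, hy, ih]
  · intro w ih; rw [hmul, hy, hmul, hx, ih]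

theorem map_x_add_y_pow (ht : IsTau t) (n : ℕ) : t ((Hx + Hy) ^ n) = (Hx + Hy) ^ n := by
  obtain ⟨h1, hmul, hx, hy⟩ := ht
  induction n with
  | zero => simpa using h1
  | succ n ih => rw [pow_succ, hmul, ih, map_add, hx, hy, add_comm Hy Hx, pow_mul_comm']

end IsTau

theorem phi_harmonic_eq_diamond {st d : H →ₗ[ℚ] H →ₗ[ℚ] H} (hst : IsHarmonic st)
    (hd : IsDiamond d) (u v : H) : phi (st u v) = d (phi u) (phi v) := by
  obtain ⟨s1, s2, sxl, sxr, syy⟩ := hst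
  suffices u ∈ ⨅ v, LinearMap.eqLocus (phi.toLinearMap ∘ₗ st.flip v)
      (d.flip (phi v) ∘ₗ phi.toLinearMap) by
    simpa using Submodule.mem_iInf _ |>.mp this v
  refine H.induction_left ?_ ?_ ?_ u <;>
    simp only [Submodule.mem_iInf, LinearMap.mem_eqLocus, LinearMap.comp_apply,
      LinearMap.flip_apply, AlgHom.toLinearMap_apply]
  · intro v; rw [s2, map_one, hd.2.1]
  · intro u ih v
    rw [sxl, map_mul, phi_x, ih, ← hd.x_add_y_mul_left, ← phi_x, ← map_mul]
  intro u ih v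
  suffices v ∈ LinearMap.eqLocus (phi.toLinearMap ∘ₗ st (Hy * u))
      (d (phi (Hy * u)) ∘ₗ phi.toLinearMap) from this
  refine H.induction_left ?_ ?_ ?_ v <;>
    simp only [LinearMap.mem_eqLocus, LinearMap.comp_apply, AlgHom.toLinearMap_apply]
  · rw [s1, map_one, hd.1]
  · intro v ihv
    rw [sxr, map_mul, phi_x, ihv, ← hd.x_add_y_mul_right, ← phi_x, ← map_mul]
  · intro v ihv
    have e : phi (Hy * u) = -(Hy * phi u) ∧ phi (Hy * v) = -(Hy * phi v) := by
      simp only [map_mul, phi_y, neg_mul, and_self]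
    rw [syy, map_mul phi, map_add phi, map_add phi, map_mul phi, phi_x, phi_y, ih, ih, ihv,
      e.1, e.2]
    simp only [map_neg, LinearMap.neg_apply, neg_neg]
    -- `(x + y) (a ◇ b) = x a ◇ b + y a ◇ b` absorbs the `x`-term of the harmonic recursion
    rw [hd.2.2.2.2.2, ← hd.x_add_y_mul_left, add_mul, map_add, LinearMap.add_apply]
    noncomm_ring

theorem phi_harmonic_y_mul_eq_diamond {st d : H →ₗ[ℚ] H →ₗ[ℚ] H} (hst : IsHarmonic st)
    (hd : IsDiamond d) (p q : H) :
    phi (st (Hy * p) (Hy * q)) = d (Hy * phi p) (Hy * phi q) := by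
  simp only [phi_harmonic_eq_diamond hst hd, map_mul, phi_y, neg_mul, map_neg,
    LinearMap.neg_apply, neg_neg]

theorem setOf_phi_harmonic_eq_setOf_diamond {st d : H →ₗ[ℚ] H →ₗ[ℚ] H} (hst : IsHarmonic st)
    (hd : IsDiamond d) :
    {w : H | ∃ p q : H, w = phi (st (Hy * p) (Hy * q)) * Hx}
      = {w : H | ∃ p q : H, w = d (Hy * p) (Hy * q) * Hx} := by
  ext w
  constructor
  · rintro ⟨p, q, rfl⟩
    exact ⟨phi p, phi q, by rw [phi_harmonic_y_mul_eq_diamond hst hd]⟩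
  · rintro ⟨p, q, rfl⟩
    exact ⟨phi p, phi q, by rw [phi_harmonic_y_mul_eq_diamond hst hd, phi_involutive,
      phi_involutive]⟩

/-- Bundled bilinearly so that the telescoping in `w₁` runs as a submodule induction. -/
def diamondRel (d : H →ₗ[ℚ] H →ₗ[ℚ] H) (t : H →ₗ[ℚ] H) : H →ₗ[ℚ] H →ₗ[ℚ] H :=
  LinearMap.mk₂ ℚ (fun w1 w2 => Hy * w1 * w2 * Hx - Hy * d (t w1) w2 * Hx)
    (fun _ _ _ => by simp only [map_add, LinearMap.add_apply]; noncomm_ring)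
    (fun _ _ _ => by
      simp only [map_smul, LinearMap.smul_apply, mul_smul_comm, smul_mul_assoc, smul_sub])
    (fun _ _ _ => by simp only [map_add]; noncomm_ring)
    (fun _ _ _ => by simp only [map_smul, mul_smul_comm, smul_mul_assoc, smul_sub])

section Relations

variable {d : H →ₗ[ℚ] H →ₗ[ℚ] H} {t : H →ₗ[ℚ] H}

theorem diamondRel_apply (w1 w2 : H) :
    diamondRel d t w1 w2 = Hy * w1 * w2 * Hx - Hy * d (t w1) w2 * Hx := rfl

theorem diamondRel_one_left (hd : IsDiamond d) (ht : IsTau t) (w : H) :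
    diamondRel d t 1 w = 0 := by
  rw [diamondRel_apply, ht.1, hd.2.1, mul_one, sub_self]

theorem diamondRel_mul_y_left (hd : IsDiamond d) (ht : IsTau t) (w1 w2 : H) :
    diamondRel d t (w1 * Hy) w2
      = diamondRel d t w1 (Hy * w2) + d (Hy * t w1) (Hy * w2) * Hx := by
  rw [diamondRel_apply, diamondRel_apply, ht.2.1, ht.2.2.2, hd.2.2.2.2.2]
  noncomm_ring

theorem diamondRel_mul_x_left (hd : IsDiamond d) (ht : IsTau t) (w1 w2 : H) :
    diamondRel d t (w1 * Hx) w2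
      = diamondRel d t w1 (Hx * w2) - d (Hy * t w1) (Hy * w2) * Hx := by
  have hmix := hd.x_mul_add_y_mul_right_eq_left (t w1) w2
  rw [diamondRel_apply, diamondRel_apply, ht.2.1, ht.2.2.1, hd.2.2.2.2.2]
  linear_combination (norm := noncomm_ring) Hy * hmix * Hx

theorem span_diamond_eq_span_diamondRel (hd : IsDiamond d) (ht : IsTau t) :
    Submodule.span ℚ {w : H | ∃ p q : H, w = d (Hy * p) (Hy * q) * Hx}
      = Submodule.span ℚ {w : H | ∃ w1 w2 : H, w = diamondRel d t w1 w2} := by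
  set A := Submodule.span ℚ {w : H | ∃ p q : H, w = d (Hy * p) (Hy * q) * Hx}
  refine le_antisymm (Submodule.span_le.mpr ?_) (Submodule.span_le.mpr ?_)
  · rintro _ ⟨p, q, rfl⟩
    have h := diamondRel_mul_y_left hd ht (t p) q
    rw [ht.involutive, ← sub_eq_iff_eq_add'] at h
    rw [← h]
    exact sub_mem (Submodule.subset_span ⟨_, _, rfl⟩) (Submodule.subset_span ⟨_, _, rfl⟩)
  · rintro _ ⟨w1, w2, rfl⟩
    have hA (p q : H) : d (Hy * p) (Hy * q) * Hx ∈ A := Submodule.subset_span ⟨p, q, rfl⟩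
    suffices w1 ∈ ⨅ w2, A.comap ((diamondRel d t).flip w2) from
      Submodule.mem_iInf _ |>.mp this w2
    refine H.induction_right ?_ ?_ ?_ w1 <;>
      simp only [Submodule.mem_iInf, Submodule.mem_comap, LinearMap.flip_apply]
    · simp [diamondRel_one_left hd ht]
    · intro w ih w2
      rw [diamondRel_mul_x_left hd ht]
      exact sub_mem (ih _) (hA _ _)
    · intro w ih w2
      rw [diamondRel_mul_y_left hd ht]
      exact add_mem (ih _) (hA _ _)

theorem setOf_x_add_y_pow_eq_setOf_diamondRel (hd : IsDiamond d) (ht : IsTau t) :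
    {w : H | ∃ (n : ℕ) (w1 w2 : H),
        w = Hy * w1 * (Hx + Hy) ^ n * w2 * Hx - Hy * (Hx + Hy) ^ n * d (t w1) w2 * Hx}
      = {w : H | ∃ w1 w2 : H, w = diamondRel d t w1 w2} := by
  ext w
  constructor
  · rintro ⟨n, w1, w2, rfl⟩
    refine ⟨w1 * (Hx + Hy) ^ n, w2, ?_⟩
    rw [diamondRel_apply, ht.2.1, ht.map_x_add_y_pow, hd.x_add_y_pow_mul_left]
    noncomm_ring
  · rintro ⟨w1, w2, rfl⟩
    exact ⟨0, w1, w2, by simp [diamondRel_apply]⟩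

end Relations

/-- The four `ℚ`-subspaces of `ℌ` coincide:
`A₁ = span{φ(u ∗ v)x : u,v ∈ yℌ}`, `A₂ = span{(u ◇ v)x : u,v ∈ yℌ}`,
`A₃ = span{y w₁ (x+y)^n w₂ x − y (x+y)^n (τ(w₁) ◇ w₂) x}`,
`A₄ = span{y w₁ w₂ x − y (τ(w₁) ◇ w₂) x}`. -/
theorem statement8 (st : H →ₗ[ℚ] H →ₗ[ℚ] H) (hst : IsHarmonic st)
    (d : H →ₗ[ℚ] H →ₗ[ℚ] H) (hd : IsDiamond d)
    (t : H →ₗ[ℚ] H) (ht : IsTau t) :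
    Submodule.span ℚ {w : H | ∃ p q : H, w = phi (st (Hy * p) (Hy * q)) * Hx}
        = Submodule.span ℚ {w : H | ∃ p q : H, w = d (Hy * p) (Hy * q) * Hx} ∧
    Submodule.span ℚ {w : H | ∃ p q : H, w = d (Hy * p) (Hy * q) * Hx}
        = Submodule.span ℚ {w : H | ∃ (n : ℕ) (w1 w2 : H),
            w = Hy * w1 * (Hx + Hy) ^ n * w2 * Hx
              - Hy * (Hx + Hy) ^ n * d (t w1) w2 * Hx} ∧
    Submodule.span ℚ {w : H | ∃ (n : ℕ) (w1 w2 : H),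
            w = Hy * w1 * (Hx + Hy) ^ n * w2 * Hx
              - Hy * (Hx + Hy) ^ n * d (t w1) w2 * Hx}
        = Submodule.span ℚ {w : H | ∃ w1 w2 : H,
            w = Hy * w1 * w2 * Hx - Hy * d (t w1) w2 * Hx} := by
  rw [setOf_phi_harmonic_eq_setOf_diamond hst hd, setOf_x_add_y_pow_eq_setOf_diamondRel hd ht]
  exact ⟨rfl, span_diamond_eq_span_diamondRel hd ht, rfl⟩

end
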